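/- Integration by parts for the matrix model: for any polynomial h ∈ ℝ[x] and the probability measure dμ_{0,n}(A) = exp(−n Tr(p(A) + ψ(n))) dA on n×n self-adjoint matrices with p a polynomial, ∫ Tr(h'(A)) dμ_{0,n}(A) = n ∫ Tr(h(A)) Tr(p'(A)) dμ_{0,n}(A). -/

import Mathlib

/-!
Translating `A` along the identity, `A ↦ A + t • 1`, shifts every eigenvalue by `t`. Hence
`Tr h(A)` has line derivative `Tr h'(A)` in the direction `1`, and the density
`exp(-n Tr p(A) - n² ψ)` has line derivative `-n Tr p'(A)` times itself. The identity is
integration by parts along this direction for the (translation-invariant) Haar measure, with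
integrability of all the products supplied by the moment hypothesis.
-/

open MeasureTheory Polynomial

/-- `Tr(q(A))` for a self-adjoint matrix `A`, via functional calculus: the sum
of `q` evaluated at the eigenvalues of `A`. -/
noncomputable def trFC {nn : ℕ} (q : Polynomial ℝ)
    (A : selfAdjoint (Matrix (Fin nn) (Fin nn) ℂ)) : ℝ :=
  ∑ i, q.eval (Matrix.IsHermitian.eigenvalues A.2 i)

theorem Matrix.IsHermitian.trace_cfc {ι 𝕜 : Type*} [Fintype ι] [DecidableEq ι] [RCLike 𝕜]
    {A : Matrix ι ι 𝕜} (hA : A.IsHermitian) (f : ℝ → ℝ) :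
    (cfc f A).trace = ∑ i, (f (hA.eigenvalues i) : 𝕜) := by
  rw [hA.cfc_eq, IsHermitian.cfc, Unitary.conjStarAlgAut_apply, trace_mul_cycle,
    Unitary.coe_star_mul_self, one_mul, trace_diagonal]
  rfl

theorem Matrix.IsHermitian.trace_aeval {ι 𝕜 : Type*} [Fintype ι] [DecidableEq ι] [RCLike 𝕜]
    {A : Matrix ι ι 𝕜} (hA : A.IsHermitian) (q : ℝ[X]) :
    (aeval A q).trace = ∑ i, ((q.eval (hA.eigenvalues i) : ℝ) : 𝕜) :=
  cfc_polynomial q A hA.isSelfAdjoint ▸ hA.trace_cfc _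

instance selfAdjoint.instModuleFinite {R A : Type*} [Semiring R] [StarMul R] [TrivialStar R]
    [Invertible (2 : R)] [AddCommGroup A] [Module R A] [StarAddMonoid A] [StarModule R A]
    [Module.Finite R A] : Module.Finite R (selfAdjoint A) :=
  Module.Finite.of_surjective (selfAdjointPart R) fun x => ⟨x, x.2.selfAdjointPart_apply R⟩

theorem integral_mul_hasLineDerivAt_right_eq_neg_left_of_integrable {E : Type*}
    [NormedAddCommGroup E] [NormedSpace ℝ E] [FiniteDimensional ℝ E] [MeasurableSpace E]
    [hE : BorelSpace E] {μ : Measure E} [hμ : μ.IsAddHaarMeasure] {f f' g g' : E → ℝ} {v : E}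
    (hf'g : Integrable (fun x ↦ f' x * g x) μ) (hfg' : Integrable (fun x ↦ f x * g' x) μ)
    (hfg : Integrable (fun x ↦ f x * g x) μ)
    (hf : ∀ x, HasLineDerivAt ℝ f (f' x) x v) (hg : ∀ x, HasLineDerivAt ℝ g (g' x) x v) :
    ∫ x, f x * g' x ∂μ = - ∫ x, f' x * g x ∂μ :=
  integral_bilinear_hasLineDerivAt_right_eq_neg_left_of_integrable (B := .mul ℝ ℝ)
    hf'g hfg' hfg (fun x _ => hf x) (fun x _ => hg x)

section trFC

variable {n : ℕ}

theorem trFC_eq_re_trace_aeval (q : ℝ[X]) (A : selfAdjoint (Matrix (Fin n) (Fin n) ℂ)) :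
    trFC q A = (aeval (A : Matrix (Fin n) (Fin n) ℂ) q).trace.re := by
  simp [Matrix.IsHermitian.trace_aeval A.2, trFC]

theorem trFC_one (A : selfAdjoint (Matrix (Fin n) (Fin n) ℂ)) : trFC 1 A = n := by
  simp [trFC]

theorem trFC_add_smul_one (q : ℝ[X]) (A : selfAdjoint (Matrix (Fin n) (Fin n) ℂ)) (t : ℝ) :
    trFC q (A + t • 1) = ∑ i, q.eval (Matrix.IsHermitian.eigenvalues A.2 i + t) := by
  have hAt : ((A + t • 1 : selfAdjoint _) : Matrix (Fin n) (Fin n) ℂ)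
      = aeval (A : Matrix (Fin n) (Fin n) ℂ) (X + C t) := by
    simp [Algebra.algebraMap_eq_smul_one]
  rw [trFC_eq_re_trace_aeval, hAt, ← aeval_comp, ← trFC_eq_re_trace_aeval, trFC]
  simp [eval_comp]

theorem hasLineDerivAt_trFC (q : ℝ[X]) (A : selfAdjoint (Matrix (Fin n) (Fin n) ℂ)) :
    HasLineDerivAt ℝ (trFC q) (trFC (derivative q) A) A 1 := by
  have hsum : HasDerivAt (fun t => ∑ i, q.eval (Matrix.IsHermitian.eigenvalues A.2 i + t))
      (∑ i, (derivative q).eval (Matrix.IsHermitian.eigenvalues A.2 i + 0)) 0 :=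
    HasDerivAt.fun_sum fun i _ => (q.hasDerivAt _).comp_const_add _ _
  rw [HasLineDerivAt]
  simp only [trFC_add_smul_one]
  simpa only [add_zero, trFC] using hsum

theorem hasLineDerivAt_exp_trFC (p : ℝ[X]) (a b : ℝ)
    (A : selfAdjoint (Matrix (Fin n) (Fin n) ℂ)) :
    HasLineDerivAt ℝ (fun B => Real.exp (a * trFC p B - b))
      (a * trFC (derivative p) A * Real.exp (a * trFC p A - b)) A 1 := by
  have := ((HasDerivAt.const_mul a (hasLineDerivAt_trFC p A)).sub_const b).exp
  simpa only [HasLineDerivAt, zero_smul, add_zero, mul_comm] using this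

theorem MeasureTheory.Integrable.trFC_mul_of_trFC_mul_trFC_one
    [MeasurableSpace (selfAdjoint (Matrix (Fin n) (Fin n) ℂ))]
    {μ : Measure (selfAdjoint (Matrix (Fin n) (Fin n) ℂ))} {w : _ → ℝ} {q : ℝ[X]}
    (h : Integrable (fun A => trFC q A * trFC 1 A * w A) μ) :
    Integrable (fun A => trFC q A * w A) μ := by
  have hdiv : ∀ A, trFC q A * w A = (n : ℝ)⁻¹ * (trFC q A * trFC 1 A * w A) := by
    intro A
    rcases n.eq_zero_or_pos with rfl | hn
    · simp [trFC]
    · rw [trFC_one]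
      field_simp
  simpa only [hdiv] using h.const_mul _

end trFC

attribute [local instance] Matrix.normedAddCommGroup Matrix.normedSpace

theorem matrix_integration_by_parts_general
    (nn : ℕ)
    [MeasurableSpace (selfAdjoint (Matrix (Fin nn) (Fin nn) ℂ))]
    [BorelSpace (selfAdjoint (Matrix (Fin nn) (Fin nn) ℂ))]
    (ν : Measure (selfAdjoint (Matrix (Fin nn) (Fin nn) ℂ)))
    [ν.IsAddHaarMeasure]
    (p : Polynomial ℝ)
    (ψ : ℝ)
    (dens : selfAdjoint (Matrix (Fin nn) (Fin nn) ℂ) → ℝ)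
    (hdens : ∀ A, dens A =
      Real.exp (-(nn : ℝ) * trFC p A - (nn : ℝ) ^ 2 * ψ))
    -- all polynomial moments exist
    (hmom : ∀ q q' : Polynomial ℝ,
      Integrable (fun A => trFC q A * trFC q' A * dens A) ν)
    (h : Polynomial ℝ) :
    ∫ A, trFC (derivative h) A * dens A ∂ν =
      (nn : ℝ) * ∫ A, trFC h A * trFC (derivative p) A * dens A ∂ν := by
  have hg : ∀ A, HasLineDerivAt ℝ dens (-(nn : ℝ) * trFC (derivative p) A * dens A) A 1 := by
    rw [funext hdens]
    exact hasLineDerivAt_exp_trFC p _ _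
  -- The matrix sup norm induces the subtype topology only up to unfolding, so the instances
  -- depending on the topology are passed explicitly.
  have ibp := integral_mul_hasLineDerivAt_right_eq_neg_left_of_integrable (hE := ‹_›) (hμ := ‹_›)
    (hmom (derivative h) 1).trFC_mul_of_trFC_mul_trFC_one
    (((hmom h (derivative p)).const_mul (-(nn : ℝ))).congr (.of_forall fun A => by ring))
    (hmom h 1).trFC_mul_of_trFC_mul_trFC_one (hasLineDerivAt_trFC h) hg
  have hconst : ∫ A, trFC h A * (-(nn : ℝ) * trFC (derivative p) A * dens A) ∂ν
      = -(nn : ℝ) * ∫ A, trFC h A * trFC (derivative p) A * dens A ∂ν := by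
    rw [← integral_const_mul]
    congr 1 with A
    ring
  linarith

/-- Integration by parts for the matrix model: for any polynomial
`h ∈ ℝ[x]` and the probability measure `dμ_{0,n}(A) = exp(−n Tr(p(A) + ψ(n))) dA`
on `n×n` self-adjoint matrices (`dA` a Lebesgue, i.e. additive Haar, measure on
`M_n^{SA}(ℂ)`), with `p` a convex polynomial,
`∫ Tr(h'(A)) dμ_{0,n}(A) = n ∫ Tr(h(A)) Tr(p'(A)) dμ_{0,n}(A)`. -/
theorem matrix_integration_by_parts
    (nn : ℕ) (hnn : 0 < nn)
    [MeasurableSpace (selfAdjoint (Matrix (Fin nn) (Fin nn) ℂ))]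
    [BorelSpace (selfAdjoint (Matrix (Fin nn) (Fin nn) ℂ))]
    (ν : Measure (selfAdjoint (Matrix (Fin nn) (Fin nn) ℂ)))
    [ν.IsAddHaarMeasure]
    (p : Polynomial ℝ) (hp : ConvexOn ℝ Set.univ fun x => p.eval x)
    (ψ : ℝ)
    (dens : selfAdjoint (Matrix (Fin nn) (Fin nn) ℂ) → ℝ)
    (hdens : ∀ A, dens A =
      Real.exp (-(nn : ℝ) * trFC p A - (nn : ℝ) ^ 2 * ψ))
    -- dμ_{0,n} is a probability measure
    (hprob : ∫ A, dens A ∂ν = 1)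
    -- all polynomial moments exist
    (hmom : ∀ q q' : Polynomial ℝ,
      Integrable (fun A => trFC q A * trFC q' A * dens A) ν)
    (h : Polynomial ℝ) :
    ∫ A, trFC (derivative h) A * dens A ∂ν =
      (nn : ℝ) * ∫ A, trFC h A * trFC (derivative p) A * dens A ∂ν :=
  matrix_integration_by_parts_general nn ν p ψ dens hdens hmom h
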